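/- (Case II recoloring of the parity-seeking delete) Suppose in a 2-3 red-black tree the node x is the black root of a deficient subtree, its sibling y is black, and both children of y are black or nil. Then recoloring y red produces a configuration in which the subtree rooted at the common parent p of x and y is deficient (ignoring p's color it satisfies the red-black properties, and every path from p to an external node contains one fewer black node than paths through p's sibling), the inorder traversal being unchanged. -/

import Mathlib

inductive Color where
  | red : Color
  | black : Color
deriving DecidableEq

inductive RBTree (α : Type) where
  | nil : RBTree α
  | node : Color → RBTree α → α → RBTree α → RBTree α

namespace RBTree

variable {α : Type}

/-- The color of a tree's root; external (nil) positions count as black. -/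
def color : RBTree α → Color
  | .nil => Color.black
  | .node c _ _ _ => c

/-- Inorder traversal of the keys. -/
def inorder : RBTree α → List α
  | .nil => []
  | .node _ l k r => inorder l ++ k :: inorder r

/-- `BH t n`: every path from the root of `t` to an external node contains
exactly `n` black nodes (property (3)). -/
inductive BH : RBTree α → ℕ → Prop where
  | nil : BH RBTree.nil 0
  | red {l r : RBTree α} {k : α} {n : ℕ} :
      BH l n → BH r n → BH (RBTree.node Color.red l k r) n
  | black {l r : RBTree α} {k : α} {n : ℕ} :
      BH l n → BH r n → BH (RBTree.node Color.black l k r) (n + 1)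

/-- Property (2): every red node has black children (equivalently, a red node
never has a red parent). -/
def NoRedRed : RBTree α → Prop
  | .nil => True
  | .node c l _ r =>
      (c = Color.red → color l = Color.black ∧ color r = Color.black) ∧
      NoRedRed l ∧ NoRedRed r

/-- The 2-3 condition: no node has two red children. -/
def No2Red : RBTree α → Prop
  | .nil => True
  | .node _ l _ r =>
      ¬(color l = Color.red ∧ color r = Color.red) ∧ No2Red l ∧ No2Red r

/-- A red-black tree: black root, no red-red violation, uniform black counts. -/
def IsRB (t : RBTree α) : Prop :=
  color t = Color.black ∧ NoRedRed t ∧ ∃ n, BH t n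

/-- A 2-3 red-black tree: a red-black tree where no node has two red children. -/
def Is23RB (t : RBTree α) : Prop := IsRB t ∧ No2Red t

/-- Recolor the root black. -/
def setBlack : RBTree α → RBTree α
  | .nil => .nil
  | .node _ l k r => .node Color.black l k r

/-- `Occurs s t`: `s` occurs as a subtree of `t`. -/
inductive Occurs : RBTree α → RBTree α → Prop where
  | refl (t : RBTree α) : Occurs t t
  | left {s l : RBTree α} (c : Color) (k : α) (r : RBTree α) :
      Occurs s l → Occurs s (RBTree.node c l k r)
  | right {s r : RBTree α} (c : Color) (k : α) (l : RBTree α) :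
      Occurs s r → Occurs s (RBTree.node c l k r)

/-- `Replace s s' t t'`: `t'` is obtained from `t` by replacing one
occurrence of the subtree `s` by `s'`. -/
inductive Replace (s s' : RBTree α) : RBTree α → RBTree α → Prop where
  | here : Replace s s' s s'
  | left {l l' : RBTree α} (c : Color) (k : α) (r : RBTree α) :
      Replace s s' l l' → Replace s s' (RBTree.node c l k r) (RBTree.node c l' k r)
  | right {r r' : RBTree α} (c : Color) (k : α) (l : RBTree α) :
      Replace s s' r r' → Replace s s' (RBTree.node c l k r) (RBTree.node c l k r')

/-- The list of black-node counts along all root-to-external paths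
(in left-to-right order of the external nodes). -/
def bpaths : RBTree α → List ℕ
  | .nil => [0]
  | .node c l _ r =>
      (bpaths l ++ bpaths r).map (fun m => m + if c = Color.black then 1 else 0)

/-- Height: the maximum number of edges on a path from the root to an external node. -/
def height : RBTree α → ℕ
  | .nil => 0
  | .node _ l _ r => max (height l) (height r) + 1

/-- Number of internal nodes. -/
def size : RBTree α → ℕ
  | .nil => 0
  | .node _ l _ r => size l + size r + 1

end RBTree


/-!
Recoloring `y` red lowers its black-height from `n + 1` to `n`, the black-height of `x`, so
`p` becomes balanced again with one black node fewer on every path. No new violation appears: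
`y`'s children are black, so red `y` has no red child, and `x` is black, so `p` does not get
two red children.
-/

namespace RBTree

variable {α : Type} {l r : RBTree α} {k : α} {n : ℕ}

theorem noRedRed_setBlack_node {c : Color} :
    NoRedRed (setBlack (node c l k r)) ↔ NoRedRed l ∧ NoRedRed r :=
  ⟨fun h => h.2, fun h => ⟨Color.noConfusion, h⟩⟩

theorem NoRedRed.recolor_red {c : Color} (h : NoRedRed (node c l k r))
    (hl : color l = .black) (hr : color r = .black) : NoRedRed (node .red l k r) :=
  ⟨fun _ => ⟨hl, hr⟩, h.2⟩

theorem No2Red.recolor {c : Color} (h : No2Red (node c l k r)) (c' : Color) :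
    No2Red (node c' l k r) :=
  h

theorem No2Red.node_of_color_left {c : Color} (hl : color l = .black) (h2l : No2Red l)
    (h2r : No2Red r) : No2Red (node c l k r) :=
  ⟨fun h => Color.noConfusion (hl.symm.trans h.1), h2l, h2r⟩

theorem BH.recolor_red (h : BH (node .black l k r) (n + 1)) : BH (node .red l k r) n := by
  cases h with
  | black hl hr => exact .red hl hr

theorem BH.node (c : Color) (hl : BH l n) (hr : BH r n) :
    BH (node c l k r) (n + if c = .black then 1 else 0) := by
  cases c with
  | red => exact .red hl hr
  | black => exact .black hl hr

end RBTree

open RBTree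

theorem caseII_recolor_sibling_red_general
    {α : Type} (cp : Color) (x yl yr : RBTree α) (kp ky : α) (n : ℕ)
    (hxc : color x = Color.black) (hxrr : NoRedRed x) (hx2 : No2Red x)
    (hxbh : BH x n)
    (hylc : color yl = Color.black) (hyrc : color yr = Color.black)
    (hyrr : NoRedRed (RBTree.node Color.black yl ky yr))
    (hy2 : No2Red (RBTree.node Color.black yl ky yr))
    (hybh : BH (RBTree.node Color.black yl ky yr) (n + 1)) :
    inorder (RBTree.node cp x kp (RBTree.node Color.red yl ky yr)) =
      inorder (RBTree.node cp x kp (RBTree.node Color.black yl ky yr)) ∧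
    NoRedRed (setBlack (RBTree.node cp x kp (RBTree.node Color.red yl ky yr))) ∧
    No2Red (RBTree.node cp x kp (RBTree.node Color.red yl ky yr)) ∧
    BH (RBTree.node cp x kp (RBTree.node Color.red yl ky yr))
      (n + if cp = Color.black then 1 else 0) :=
  ⟨rfl,
    noRedRed_setBlack_node.2 ⟨hxrr, hyrr.recolor_red hylc hyrc⟩,
    .node_of_color_left hxc hx2 (hy2.recolor .red),
    .node cp hxbh hybh.recolor_red⟩

/-- Case II recoloring of the parity-seeking delete: in a 2-3
red-black tree, `x` is the black root of a deficient subtree (black-height `n`,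
one less than its sibling's), its sibling `y = node black yl ky yr` is black
and both children of `y` are black or nil; `s` denotes the sibling of the
common parent `p = node cp x kp y` in the ambient tree.  Recoloring `y` red
leaves the inorder traversal unchanged and produces a configuration in which
the subtree rooted at `p` is deficient: ignoring `p`'s color it satisfies the
red-black (2-3) properties, and every path from `p` to an external node
contains one fewer black node than the paths through `p`'s sibling `s`. -/
theorem caseII_recolor_sibling_red
    {α : Type} (cp : Color) (x yl yr s : RBTree α) (kp ky : α) (n : ℕ)
    (hxc : color x = Color.black) (hxrr : NoRedRed x) (hx2 : No2Red x)
    (hxbh : BH x n)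
    (hylc : color yl = Color.black) (hyrc : color yr = Color.black)
    (hyrr : NoRedRed (RBTree.node Color.black yl ky yr))
    (hy2 : No2Red (RBTree.node Color.black yl ky yr))
    (hybh : BH (RBTree.node Color.black yl ky yr) (n + 1))
    (hs : BH s (n + 1 + if cp = Color.black then 1 else 0)) :
    inorder (RBTree.node cp x kp (RBTree.node Color.red yl ky yr)) =
      inorder (RBTree.node cp x kp (RBTree.node Color.black yl ky yr)) ∧
    NoRedRed (setBlack (RBTree.node cp x kp (RBTree.node Color.red yl ky yr))) ∧
    No2Red (RBTree.node cp x kp (RBTree.node Color.red yl ky yr)) ∧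
    BH (RBTree.node cp x kp (RBTree.node Color.red yl ky yr))
      (n + if cp = Color.black then 1 else 0) :=
  caseII_recolor_sibling_red_general cp x yl yr kp ky n hxc hxrr hx2 hxbh hylc hyrc hyrr hy2 hybh
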